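/- For all b₁, b₂ ∈ [0, 1], one has (1 − b₁²)^{1/2}(1 − b₂²)^{3/2} + b₁b₂³ ≤ 1, with equality if and only if b₁ = b₂ = 0 or b₁ = b₂ = 1. -/

import Mathlib

open Real

/-!
Put `xᵢ = √(1 - bᵢ²)`, so that `(xᵢ, bᵢ)` lies on the unit circle. For two points `(x₁, y₁)`,
`(x₂, y₂)` of the unit circle one has the identity
`2 (1 - x₁x₂³ - y₁y₂³) = (x₁ - x₂)² + (y₁ - y₂)² + 2x₁x₂y₂² + 2y₁y₂x₂²`,
whose right-hand side is a sum of nonnegative terms in the closed first quadrant. It vanishes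
exactly when the two points coincide and `x₂y₂ = 0`, i.e. at `(1, 0)` or `(0, 1)`.
-/

section UnitCircle

variable {x₁ y₁ x₂ y₂ : ℝ}

theorem two_mul_one_sub_mul_pow_three_add_mul_pow_three (h₁ : x₁ ^ 2 + y₁ ^ 2 = 1)
    (h₂ : x₂ ^ 2 + y₂ ^ 2 = 1) :
    2 * (1 - (x₁ * x₂ ^ 3 + y₁ * y₂ ^ 3)) =
      (x₁ - x₂) ^ 2 + (y₁ - y₂) ^ 2 + 2 * x₁ * x₂ * y₂ ^ 2 + 2 * y₁ * y₂ * x₂ ^ 2 := by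
  linear_combination -h₁ - (1 + 2 * x₁ * x₂ + 2 * y₁ * y₂) * h₂

theorem mul_pow_three_add_mul_pow_three_le_one (hx₁ : 0 ≤ x₁) (hy₁ : 0 ≤ y₁) (hx₂ : 0 ≤ x₂)
    (hy₂ : 0 ≤ y₂) (h₁ : x₁ ^ 2 + y₁ ^ 2 = 1) (h₂ : x₂ ^ 2 + y₂ ^ 2 = 1) :
    x₁ * x₂ ^ 3 + y₁ * y₂ ^ 3 ≤ 1 := by
  have key := two_mul_one_sub_mul_pow_three_add_mul_pow_three h₁ h₂
  have : 0 ≤ 2 * x₁ * x₂ * y₂ ^ 2 := by positivity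
  have : 0 ≤ 2 * y₁ * y₂ * x₂ ^ 2 := by positivity
  nlinarith [sq_nonneg (x₁ - x₂), sq_nonneg (y₁ - y₂)]

theorem mul_pow_three_add_mul_pow_three_eq_one_iff (hx₁ : 0 ≤ x₁) (hy₁ : 0 ≤ y₁)
    (hx₂ : 0 ≤ x₂) (hy₂ : 0 ≤ y₂) (h₁ : x₁ ^ 2 + y₁ ^ 2 = 1) (h₂ : x₂ ^ 2 + y₂ ^ 2 = 1) :
    x₁ * x₂ ^ 3 + y₁ * y₂ ^ 3 = 1 ↔ x₁ = x₂ ∧ y₁ = y₂ ∧ x₂ * y₂ = 0 := by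
  have key := two_mul_one_sub_mul_pow_three_add_mul_pow_three h₁ h₂
  constructor
  · intro h
    rw [h, sub_self, mul_zero] at key
    have : 0 ≤ 2 * x₁ * x₂ * y₂ ^ 2 := by positivity
    have : 0 ≤ 2 * y₁ * y₂ * x₂ ^ 2 := by positivity
    have hx : x₁ = x₂ := by nlinarith [sq_nonneg (x₁ - x₂), sq_nonneg (y₁ - y₂)]
    have hy : y₁ = y₂ := by nlinarith [sq_nonneg (x₁ - x₂), sq_nonneg (y₁ - y₂)]
    subst hx hy
    refine ⟨rfl, rfl, ?_⟩
    have hxy : (x₁ * y₁) ^ 2 = 0 := by nlinarith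
    exact pow_eq_zero_iff two_ne_zero |>.mp hxy
  · rintro ⟨rfl, rfl, hxy⟩
    have : (x₁ * y₁) ^ 2 = 0 := by rw [hxy]; ring
    linear_combination -key / 2 - 2 * this

end UnitCircle

theorem sqrt_one_sub_sq_mul_self_eq_zero_iff {b : ℝ} (hb : b ∈ Set.Icc (0 : ℝ) 1) :
    √(1 - b ^ 2) * b = 0 ↔ b = 0 ∨ b = 1 := by
  rw [mul_eq_zero, Real.sqrt_eq_zero', sub_nonpos, or_comm]
  constructor
  · rintro (h | h)
    · exact Or.inl h
    · exact Or.inr (le_antisymm hb.2 (by nlinarith [hb.1]))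
  · rintro (h | rfl)
    · exact Or.inl h
    · exact Or.inr (by norm_num)

/-- For `b₁, b₂ ∈ [0,1]`, `(1−b₁²)^{1/2}(1−b₂²)^{3/2} + b₁b₂³ ≤ 1`, with equality
iff `b₁ = b₂ = 0` or `b₁ = b₂ = 1`. -/
theorem key_algebraic_inequality (b₁ b₂ : ℝ)
    (hb₁ : b₁ ∈ Set.Icc (0 : ℝ) 1) (hb₂ : b₂ ∈ Set.Icc (0 : ℝ) 1) :
    Real.sqrt (1 - b₁ ^ 2) * Real.sqrt (1 - b₂ ^ 2) ^ 3 + b₁ * b₂ ^ 3 ≤ 1 ∧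
    (Real.sqrt (1 - b₁ ^ 2) * Real.sqrt (1 - b₂ ^ 2) ^ 3 + b₁ * b₂ ^ 3 = 1 ↔
      (b₁ = 0 ∧ b₂ = 0) ∨ (b₁ = 1 ∧ b₂ = 1)) := by
  have on_circle : ∀ b ∈ Set.Icc (0 : ℝ) 1, √(1 - b ^ 2) ^ 2 + b ^ 2 = 1 := fun b hb => by
    rw [Real.sq_sqrt (by nlinarith [hb.1, hb.2]), sub_add_cancel]
  have h₁ := on_circle b₁ hb₁
  have h₂ := on_circle b₂ hb₂
  refine ⟨mul_pow_three_add_mul_pow_three_le_one (sqrt_nonneg _) hb₁.1 (sqrt_nonneg _) hb₂.1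
    h₁ h₂, ?_⟩
  rw [mul_pow_three_add_mul_pow_three_eq_one_iff (sqrt_nonneg _) hb₁.1 (sqrt_nonneg _) hb₂.1
    h₁ h₂, sqrt_one_sub_sq_mul_self_eq_zero_iff hb₂]
  constructor
  · rintro ⟨-, rfl, h | h⟩ <;> simp [h]
  · rintro (⟨rfl, rfl⟩ | ⟨rfl, rfl⟩) <;> simp
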